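/- arXiv:0711.1536 — 2 statements merged into one kernel-verified Lean document; each statement's English description precedes it below -/
import Mathlib

section
/- Let A and B be finite groups with a left A-action and a right B-action on a set X such that a(xb) = (ax)b, and fix x ∈ X. Then the cardinality of the intersection of orbits (Ax) ∩ (xB) divides gcd(|Ax|, |xB|). (Corollary 3.2, second part.) -/
/-!
Since the actions commute, `a • orbit B x = orbit B (a • x)`, so the elements of `A` moving `x`
into `xB` form the setwise stabilizer `K` of `xB`. Its orbit through `x` is `Ax ∩ xB`, and it
contains `Stab_A x`, hence `|Ax ∩ xB| = [K : Stab_K x]` divides `[A : Stab_A x] = |Ax|`.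
The same argument with the roles of `A` and `B` exchanged gives divisibility of `|xB|`.
-/

open Pointwise

namespace MulAction

variable {G H X : Type*} [Group G] [Group H] [MulAction G X] [MulAction H X]

theorem card_orbit_subgroup_dvd_of_stabilizer_le (x : X) {K : Subgroup G}
    (hK : stabilizer G x ≤ K) : Nat.card (orbit K x) ∣ Nat.card (orbit G x) := by
  have hstab : stabilizer K x = (stabilizer G x).subgroupOf K := by ext; rfl
  rw [Nat.card_coe_set_eq, Nat.card_coe_set_eq, ← index_stabilizer, ← index_stabilizer, hstab]
  exact Subgroup.relIndex_dvd_index_of_le hK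

variable [SMulCommClass G H X]

theorem smul_orbit_eq_orbit_smul_of_smulCommClass (g : G) (x : X) :
    g • orbit H x = orbit H (g • x) := by
  simp only [orbit, ← Set.range_smul]
  exact congrArg Set.range (funext fun h => smul_comm g h x)

theorem mem_stabilizer_orbit_iff {g : G} {x : X} :
    g ∈ stabilizer G (orbit H x) ↔ g • x ∈ orbit H x := by
  rw [mem_stabilizer_iff, smul_orbit_eq_orbit_smul_of_smulCommClass, orbit_eq_iff]

theorem orbit_stabilizer_orbit (x : X) :
    orbit (stabilizer G (orbit H x)) x = orbit G x ∩ orbit H x := by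
  ext y
  constructor
  · rintro ⟨⟨g, hg⟩, rfl⟩
    exact ⟨mem_orbit x g, mem_stabilizer_orbit_iff.mp hg⟩
  · rintro ⟨⟨g, rfl⟩, hy⟩
    exact ⟨⟨g, mem_stabilizer_orbit_iff.mpr hy⟩, rfl⟩

theorem stabilizer_le_stabilizer_orbit (x : X) :
    stabilizer G x ≤ stabilizer G (orbit H x) := fun g hg => by
  rw [mem_stabilizer_orbit_iff, mem_stabilizer_iff.mp hg]
  exact mem_orbit_self x

theorem card_orbit_inter_dvd_card_orbit (x : X) :
    Nat.card ↥(orbit G x ∩ orbit H x) ∣ Nat.card (orbit G x) := by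
  rw [← orbit_stabilizer_orbit]
  exact card_orbit_subgroup_dvd_of_stabilizer_le x (stabilizer_le_stabilizer_orbit x)

end MulAction

theorem intersection_orbit_card_dvd_gcd_general {A B X : Type*} [Group A] [Group B]
    [MulAction A X] [MulAction Bᵐᵒᵖ X] [SMulCommClass A Bᵐᵒᵖ X] (x : X) :
    Nat.card ↥(MulAction.orbit A x ∩ MulAction.orbit Bᵐᵒᵖ x) ∣
      Nat.gcd (Nat.card ↥(MulAction.orbit A x)) (Nat.card ↥(MulAction.orbit Bᵐᵒᵖ x)) := by
  have := SMulCommClass.symm A Bᵐᵒᵖ X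
  refine Nat.dvd_gcd (MulAction.card_orbit_inter_dvd_card_orbit x) ?_
  rw [Set.inter_comm]
  exact MulAction.card_orbit_inter_dvd_card_orbit x

/-- **Corollary 3.2 (second part).** Let `A`, `B` be finite groups acting on a set `X`
on the left and right respectively, with commuting actions (the right `B`-action encoded
as a left `Bᵐᵒᵖ`-action).  For `x ∈ X`, the cardinality of the intersection of orbits
`(Ax) ∩ (xB)` divides `gcd(|Ax|, |xB|)`. -/
theorem intersection_orbit_card_dvd_gcd {A B X : Type*} [Group A] [Group B]
    [Finite A] [Finite B]
    [MulAction A X] [MulAction Bᵐᵒᵖ X] [SMulCommClass A Bᵐᵒᵖ X] (x : X) :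
    Nat.card ↥(MulAction.orbit A x ∩ MulAction.orbit Bᵐᵒᵖ x) ∣
      Nat.gcd (Nat.card ↥(MulAction.orbit A x)) (Nat.card ↥(MulAction.orbit Bᵐᵒᵖ x)) :=
  intersection_orbit_card_dvd_gcd_general x
end

section
/- Let p be a prime and P a finite p-group. For i ≥ 0 let Z_i(P) denote the i-th term of the upper central series of P (Z_0 = 1, Z_{i+1}/Z_i = Z(P/Z_i)), so that with P_1 = P and P_{i+1} = P_i/Z(P_i) one has P_i = P/Z_{i-1}(P) and Z(P_i) = Z_i(P)/Z_{i-1}(P). If for every i ≥ 0 the automorphism group Aut(Z_{i+1}(P)/Z_i(P)) is a p-group, then Aut(P) is a p-group. (Corollary 4.2.) -/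
/-!
An automorphism of `P` is controlled by what it induces on the characteristic subgroup `Z(P)`
and on the quotient `P/Z(P)`: if `φ` fixes `Z(P)` pointwise and acts trivially on `P/Z(P)`,
then `φᵏ x = x (x⁻¹ φ x)ᵏ`, so the order of `φ` divides the exponent of `Z(P)`. Hence `Aut(P)`
is an extension of a `p`-group by a subgroup of `Aut(P/Z(P)) × Aut(Z(P))`. Since
`(P/Z(P))/Z_i(P/Z(P)) ≅ P/Z_{i+1}(P)`, the hypothesis passes to `P/Z(P)`, and induction along
the upper central series concludes.
-/

open Subgroup QuotientGroup

section

variable {G : Type*} [Group G] {p : ℕ}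

def MulAut.characteristicQuotient (H : Subgroup G) [H.Characteristic] :
    MulAut G →* MulAut (G ⧸ H) where
  toFun φ := QuotientGroup.congr H H φ (characteristic_iff_map_eq.mp ‹_› φ)
  map_one' := by
    ext x
    induction x using QuotientGroup.induction_on
    rfl
  map_mul' φ ψ := by
    ext x
    induction x using QuotientGroup.induction_on
    rfl

theorem MulAut.pow_apply_eq_mul_pow {N : Subgroup G} {φ : MulAut G}
    (hfix : ∀ z ∈ N, φ z = z) (hcoset : ∀ x, x⁻¹ * φ x ∈ N) (k : ℕ) (x : G) :
    (φ ^ k) x = x * (x⁻¹ * φ x) ^ k := by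
  induction k with
  | zero => simp
  | succ k ih =>
    rw [pow_succ', MulAut.mul_apply, ih, map_mul, hfix _ (pow_mem (hcoset x) k), pow_succ',
      ← mul_assoc, mul_inv_cancel_left]

theorem MulAut.pow_eq_one_of_forall_pow_eq_one {N : Subgroup G} {φ : MulAut G}
    (hfix : ∀ z ∈ N, φ z = z) (hcoset : ∀ x, x⁻¹ * φ x ∈ N) {m : ℕ}
    (hm : ∀ z ∈ N, z ^ m = 1) : φ ^ m = 1 := by
  ext x
  rw [MulAut.pow_apply_eq_mul_pow hfix hcoset, hm _ (hcoset x), mul_one, MulAut.one_apply]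

namespace IsPGroup

theorem prod {H : Type*} [Group H] (hG : IsPGroup p G) (hH : IsPGroup p H) :
    IsPGroup p (G × H) := by
  rintro ⟨g, h⟩
  obtain ⟨j, hj⟩ := hG g
  obtain ⟨k, hk⟩ := hH h
  refine ⟨j + k, Prod.ext ?_ ?_⟩
  · simp [pow_add, pow_mul, hj]
  · simp [pow_add, mul_comm (p ^ j), pow_mul, hk]

theorem of_ker {H : Type*} [Group H] (f : G →* H) (hH : IsPGroup p H)
    (hker : IsPGroup p f.ker) : IsPGroup p G := by
  have := (hH.to_subgroup ⊤).comap_of_ker_isPGroup f hker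
  rw [comap_top] at this
  exact this.of_equiv topEquiv

theorem ker_mulAut_characteristicQuotient_prod {H : Subgroup G} [H.Characteristic] [Finite H]
    (hH : IsPGroup p H) :
    IsPGroup p ((MulAut.characteristicQuotient H).prod (MulAut.characteristic H)).ker := by
  obtain ⟨n, hn⟩ := isPGroup_iff_exists_pow_pow_eq_one.mp hH
  rintro ⟨φ, hφ⟩
  obtain ⟨hquot, hsub⟩ := Prod.ext_iff.mp hφ
  refine ⟨n, Subtype.ext (MulAut.pow_eq_one_of_forall_pow_eq_one (N := H) ?_ ?_ ?_)⟩
  · intro z hz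
    exact congrArg Subtype.val (DFunLike.congr_fun hsub ⟨z, hz⟩)
  · intro x
    exact QuotientGroup.eq.mp (DFunLike.congr_fun hquot (x : G ⧸ H)).symm
  · intro z hz
    exact congrArg Subtype.val (hn ⟨z, hz⟩)

theorem mulAut_of_characteristic {H : Subgroup G} [H.Characteristic] [Finite H]
    (hH : IsPGroup p H) (hquot : IsPGroup p (MulAut (G ⧸ H))) (hsub : IsPGroup p (MulAut H)) :
    IsPGroup p (MulAut G) :=
  of_ker _ (hquot.prod hsub) (ker_mulAut_characteristicQuotient_prod hH)

end IsPGroup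

def Subgroup.quotientUpperCentralSeriesQuotientCenterEquiv (n : ℕ) :
    (G ⧸ center G) ⧸ upperCentralSeries (G ⧸ center G) n ≃* G ⧸ upperCentralSeries G (n + 1) :=
  have hmap : (upperCentralSeries G (n + 1)).map (mk' (center G)) =
      upperCentralSeries (G ⧸ center G) n := by
    rw [← comap_upperCentralSeries_quotient_center,
      map_comap_eq_self_of_surjective (mk'_surjective _)]
  (quotientMulEquivOfEq hmap.symm).trans <| quotientQuotientEquivQuotient _ _ <| by
    simpa only [upperCentralSeries_one] using upperCentralSeries_mono G (Nat.le_add_left 1 n)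

end

/-- **Corollary 4.2.** Let `p` be a prime and `P` a finite `p`-group.  With
`P₁ = P`, `P_{i+1} = P_i/Z(P_i)`, one has `P_{i+1} = P/Z_i(P)` where `Z_i(P)` is the
upper central series, and `Z(P_{i+1}) = Z_{i+1}(P)/Z_i(P)`.  If for every `i ≥ 0` the
automorphism group `Aut(Z_{i+1}(P)/Z_i(P)) = Aut(Z(P/Z_i(P)))` is a `p`-group, then
`Aut(P)` is a `p`-group. -/
theorem aut_is_pGroup_of_aut_upper_central_quotients (p : ℕ) [Fact p.Prime]
    {P : Type*} [Group P] [Finite P] (hP : IsPGroup p P)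
    (h : ∀ i : ℕ, IsPGroup p (MulAut ↥(Subgroup.center (P ⧸ Subgroup.upperCentralSeries P i)))) :
    IsPGroup p (MulAut P) := by
  have := hP.isNilpotent
  revert hP h ‹Finite P›
  refine Group.nilpotent_center_quotient_ind (P := fun G _ _ => ∀ [Finite G], IsPGroup p G →
      (∀ i, IsPGroup p (MulAut (center (G ⧸ Subgroup.upperCentralSeries G i)))) →
        IsPGroup p (MulAut G))
    P (fun G _ _ _ _ _ => ?_) fun G _ _ ih _ hP h => ?_
  · have : Subsingleton (MulAut G) := ⟨fun _ _ => MulEquiv.ext fun _ => Subsingleton.elim _ _⟩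
    exact .of_subsingleton _ _
  have hquot : IsPGroup p (MulAut (G ⧸ center G)) := ih (hP.to_quotient _) fun i =>
    (h (i + 1)).of_equiv <|
      MulAut.congr (centerCongr (quotientUpperCentralSeriesQuotientCenterEquiv i).symm)
  have hcenter : IsPGroup p (MulAut (center G)) :=
    (h 0).of_equiv (MulAut.congr (centerCongr quotientBot))
  exact (hP.to_subgroup _).mulAut_of_characteristic hquot hcenter
end
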